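/- The map g is area-preserving: g : M → M is a bijection and is measure preserving with respect to the measure on M induced by Lebesgue measure on ℝ² via the quotient map q (the pushforward of this measure under g equals itself). -/

import Mathlib

open Real MeasureTheory

noncomputable section

instance : Fact (0 < 2 * π) := ⟨by positivity⟩

/-- The cylinder `(ℝ/2πℤ) × ℝ`. -/
abbrev Cyl : Type := AddCircle (2 * π) × ℝ

/-- The quotient map `ℝ² → Cyl`. -/
def q2 (v : ℝ × ℝ) : Cyl := ((v.1 : AddCircle (2 * π)), v.2)

/-- The lift of a point of the cylinder to the fundamental domain `[-π, π) × ℝ`. -/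
def cylLift (m : Cyl) : ℝ × ℝ :=
  ((AddCircle.equivIco (2 * π) (-π) m.1 : ℝ), m.2)

/-- The Euclidean norm on `ℝ × ℝ`. -/
def eNorm (v : ℝ × ℝ) : ℝ := Real.sqrt (v.1 ^ 2 + v.2 ^ 2)

/-- Rotation of the plane about the origin by angle `a`. -/
def rot (a : ℝ) (v : ℝ × ℝ) : ℝ × ℝ :=
  (Real.cos a * v.1 - Real.sin a * v.2, Real.sin a * v.1 + Real.cos a * v.2)

/-- The planar twist map: rotate `v` about the origin by the angle `α (eNorm v)`. -/
def twist (α : ℝ → ℝ) (v : ℝ × ℝ) : ℝ × ℝ := rot (α (eNorm v)) v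

/-- The twist map descended to the cylinder. -/
def psi (α : ℝ → ℝ) (m : Cyl) : Cyl := q2 (twist α (cylLift m))

/-- The half rotation `(θ, s) ↦ (θ + π, s)` of the cylinder. -/
def phi (m : Cyl) : Cyl := (m.1 + ((π : ℝ) : AddCircle (2 * π)), m.2)

/-- The composition `g = φ ∘ ψ`. -/
def gmap (α : ℝ → ℝ) : Cyl → Cyl := phi ∘ psi α

/-- The image in the cylinder of the open Euclidean unit disk centered at the origin. -/
def Dset : Set Cyl := q2 '' {v : ℝ × ℝ | eNorm v < 1}

/-- The distance on the cylinder induced by the Euclidean metric on `ℝ²`. -/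
def cylDist (x y : Cyl) : ℝ := Real.sqrt (dist x.1 y.1 ^ 2 + dist x.2 y.2 ^ 2)

/-- The hypotheses on the twist angle profile `α`: continuous, non-increasing on `[0, ∞)`,
greater than `0.2` on `[0, 0.7]` and vanishing on `[0.9, ∞)`. -/
structure TwistAngle (α : ℝ → ℝ) : Prop where
  cont : Continuous α
  anti : AntitoneOn α (Set.Ici 0)
  big : ∀ r ∈ Set.Icc (0 : ℝ) 0.7, 0.2 < α r
  zero : ∀ r : ℝ, 0.9 ≤ r → α r = 0

/-- The measure on the cylinder induced by Lebesgue measure on ℝ² via the quotient map: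
the pushforward under q of Lebesgue measure restricted to the fundamental domain
[-π, π) × ℝ. -/
def cylMeasure : Measure Cyl :=
  Measure.map q2 (volume.restrict (Set.Ico (-π) π ×ˢ (Set.univ : Set ℝ)))

/-!
In polar coordinates `(r, θ) ∈ (0, ∞) × ℝ/2πℤ`, in which Lebesgue measure becomes `r dr ⊗ dθ`,
the twist is the skew translation `(r, θ) ↦ (r, θ + α r)`; it preserves this product measure by
Fubini and the translation invariance of `dθ`. Since `α` vanishes beyond radius `0.9 < π`, the
twist maps the fundamental strip `[-π, π) × ℝ` onto itself, so it descends to a measure-preserving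
bijection `ψ` of the cylinder, inverted by the twist with angle `-α`. Finally `φ` is a translation
of the group `ℝ/2πℤ × ℝ`, whose Haar measure is the given measure.
-/

open Set Function

lemma measurePreserving_addCircle_mk_of_ae_eq {T : ℝ} [Fact (0 < T)] {s : Set ℝ} {t : ℝ}
    (hs : s =ᵐ[volume] Ioc t (t + T)) :
    MeasurePreserving ((↑) : ℝ → AddCircle T) (volume.restrict s) volume := by
  rw [Measure.restrict_congr_set hs]
  exact AddCircle.measurePreserving_mk T t

lemma measurePreserving_skew_add_right {β G : Type*} [MeasurableSpace β] [MeasurableSpace G]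
    [AddGroup G] [MeasurableAdd₂ G] (μ : Measure β) (ν : Measure G) [SFinite μ] [SFinite ν]
    [ν.IsAddRightInvariant] {f : β → G} (hf : Measurable f) :
    MeasurePreserving (fun z : β × G => (z.1, z.2 + f z.1)) (μ.prod ν) (μ.prod ν) :=
  (MeasurePreserving.id μ).skew_product (g := fun b x => x + f b) (by fun_prop)
    (ae_of_all _ fun b => (measurePreserving_add_right ν (f b)).map_eq)

lemma rot_zero (v : ℝ × ℝ) : rot 0 v = v := by simp [rot]

lemma rot_rot (a b : ℝ) (v : ℝ × ℝ) : rot a (rot b v) = rot (a + b) v := by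
  simp only [rot, Real.cos_add, Real.sin_add]
  exact Prod.ext (by ring) (by ring)

lemma eNorm_rot (a : ℝ) (v : ℝ × ℝ) : eNorm (rot a v) = eNorm v := by
  simp only [eNorm, rot]
  congr 1
  linear_combination (v.1 ^ 2 + v.2 ^ 2) * Real.sin_sq_add_cos_sq a

lemma abs_fst_le_eNorm (v : ℝ × ℝ) : |v.1| ≤ eNorm v := by
  rw [eNorm, ← Real.sqrt_sq_eq_abs]
  exact Real.sqrt_le_sqrt (by nlinarith [sq_nonneg v.2])

lemma eNorm_twist (α : ℝ → ℝ) (v : ℝ × ℝ) : eNorm (twist α v) = eNorm v := eNorm_rot _ v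

lemma twist_neg_twist (α : ℝ → ℝ) (v : ℝ × ℝ) : twist (-α) (twist α v) = v := by
  rw [twist, eNorm_twist, twist, rot_rot, Pi.neg_apply, neg_add_cancel, rot_zero]

lemma measurable_twist {α : ℝ → ℝ} (hα : Measurable α) : Measurable (twist α) := by
  have hN : Measurable eNorm := by unfold eNorm; fun_prop
  unfold twist rot
  fun_prop

def polarCircle (z : ℝ × AddCircle (2 * π)) : ℝ × ℝ :=
  (z.1 * Real.cos_periodic.lift z.2, z.1 * Real.sin_periodic.lift z.2)

lemma polarCircle_coe (r θ : ℝ) : polarCircle (r, θ) = (r * Real.cos θ, r * Real.sin θ) := rfl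

lemma continuous_polarCircle : Continuous polarCircle := by
  have hcos : Continuous Real.cos_periodic.lift :=
    isQuotientMap_quotient_mk'.continuous_iff.mpr Real.continuous_cos
  have hsin : Continuous Real.sin_periodic.lift :=
    isQuotientMap_quotient_mk'.continuous_iff.mpr Real.continuous_sin
  unfold polarCircle
  fun_prop

def radialMeasure : Measure ℝ := (volume.restrict (Ioi 0)).withDensity fun r => ENNReal.ofReal |r|

instance : SFinite radialMeasure := by unfold radialMeasure; infer_instance

lemma map_polarCoord_symm :
    (radialMeasure.prod (volume.restrict (Ioo (-π) π))).map polarCoord.symm = volume := by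
  rw [radialMeasure, prod_withDensity_left measurable_abs.ennreal_ofReal, Measure.prod_restrict,
    ← Measure.volume_eq_prod, ← polarCoord_target]
  simp_rw [← det_fderivPolarCoordSymm]
  rw [map_withDensity_abs_det_fderiv_eq_addHaar volume
      polarCoord.open_target.measurableSet.nullMeasurableSet
      (fun p _ => (hasFDerivAt_polarCoord_symm p).hasFDerivWithinAt) polarCoord.symm.injOn,
    polarCoord.symm_image_target_eq_source,
    Measure.restrict_congr_set polarCoord_source_ae_eq_univ, Measure.restrict_univ]

lemma map_polarCircle : (radialMeasure.prod volume).map polarCircle = volume := by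
  have hmk : MeasurePreserving ((↑) : ℝ → AddCircle (2 * π))
      (volume.restrict (Ioo (-π) π)) volume :=
    measurePreserving_addCircle_mk_of_ae_eq (t := -π)
      (by rw [show -π + 2 * π = π by ring]; exact Ioo_ae_eq_Ioc)
  have hwrap := (MeasurePreserving.id radialMeasure).prod hmk
  rw [← hwrap.map_eq, Measure.map_map continuous_polarCircle.measurable hwrap.measurable]
  exact map_polarCoord_symm

lemma twist_polarCircle (α : ℝ → ℝ) {r : ℝ} (hr : 0 ≤ r) (θ : AddCircle (2 * π)) :
    twist α (polarCircle (r, θ)) = polarCircle (r, θ + (α r : AddCircle (2 * π))) := by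
  induction θ using QuotientAddGroup.induction_on with
  | H θ =>
    have hnorm : eNorm (r * Real.cos θ, r * Real.sin θ) = r := by
      have hsq : (r * Real.cos θ) ^ 2 + (r * Real.sin θ) ^ 2 = r ^ 2 := by
        linear_combination r ^ 2 * Real.sin_sq_add_cos_sq θ
      simp only [eNorm, hsq, Real.sqrt_sq hr]
    rw [← QuotientAddGroup.mk_add, polarCircle_coe, polarCircle_coe, twist, hnorm, rot,
      Real.cos_add, Real.sin_add]
    exact Prod.ext (by ring) (by ring)

lemma ae_pos_radialMeasure_prod (ν : Measure (AddCircle (2 * π))) [SFinite ν] :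
    ∀ᵐ z ∂radialMeasure.prod ν, 0 < z.1 :=
  Measure.quasiMeasurePreserving_fst.ae
    ((withDensity_absolutelyContinuous _ _).ae_le (ae_restrict_mem measurableSet_Ioi))

theorem twist_measurePreserving {α : ℝ → ℝ} (hα : Measurable α) :
    MeasurePreserving (twist α) volume volume := by
  set ρ := radialMeasure.prod (volume : Measure (AddCircle (2 * π)))
  have hP : MeasurePreserving polarCircle ρ volume :=
    ⟨continuous_polarCircle.measurable, map_polarCircle⟩
  have hS := measurePreserving_skew_add_right radialMeasure volume
    ((AddCircle.measurable_mk' (a := 2 * π)).comp hα)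
  set skew : ℝ × AddCircle (2 * π) → ℝ × AddCircle (2 * π) :=
    fun z => (z.1, z.2 + (α z.1 : AddCircle (2 * π)))
  have hconj : twist α ∘ polarCircle =ᵐ[ρ] polarCircle ∘ skew :=
    (ae_pos_radialMeasure_prod volume).mono fun z hz => twist_polarCircle α hz.le z.2
  refine ⟨measurable_twist hα, ?_⟩
  calc volume.map (twist α) = (ρ.map polarCircle).map (twist α) := by rw [hP.map_eq]
    _ = ρ.map (polarCircle ∘ skew) := by
      rw [Measure.map_map (measurable_twist hα) hP.measurable, Measure.map_congr hconj]
    _ = volume := (hP.comp hS).map_eq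

def strip : Set (ℝ × ℝ) := Ico (-π) π ×ˢ univ

lemma measurableSet_strip : MeasurableSet strip := measurableSet_Ico.prod MeasurableSet.univ

lemma mapsTo_twist_strip {α : ℝ → ℝ} (hα : ∀ r, π ≤ r → α r = 0) :
    MapsTo (twist α) strip strip := by
  intro v hv
  rcases lt_or_ge (eNorm v) π with hv_inner | hv_outer
  · have h := (abs_fst_le_eNorm (twist α v)).trans_lt ((eNorm_twist α v).trans_lt hv_inner)
    exact ⟨⟨(abs_lt.mp h).1.le, (abs_lt.mp h).2⟩, mem_univ _⟩
  · rwa [twist, hα _ hv_outer, rot_zero]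

lemma twist_preimage_strip {α : ℝ → ℝ} (hα : ∀ r, π ≤ r → α r = 0) :
    twist α ⁻¹' strip = strip := by
  refine Subset.antisymm (fun v hv => ?_) (mapsTo_twist_strip hα)
  rw [← twist_neg_twist α v]
  exact mapsTo_twist_strip (α := -α) (fun r hr => by simp [hα r hr]) hv

lemma cylLift_mem_strip (m : Cyl) : cylLift m ∈ strip := by
  obtain ⟨h₁, h₂⟩ := (AddCircle.equivIco (2 * π) (-π) m.1).2
  have h₂' : (AddCircle.equivIco (2 * π) (-π) m.1 : ℝ) < π := by linarith
  exact ⟨⟨h₁, h₂'⟩, mem_univ _⟩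

lemma q2_cylLift (m : Cyl) : q2 (cylLift m) = m :=
  Prod.ext ((AddCircle.equivIco (2 * π) (-π)).symm_apply_apply m.1) rfl

lemma cylLift_q2 {v : ℝ × ℝ} (hv : v ∈ strip) : cylLift (q2 v) = v := by
  refine Prod.ext ?_ rfl
  change ((AddCircle.equivIco (2 * π) (-π) (v.1 : AddCircle (2 * π)) : ℝ)) = v.1
  rw [AddCircle.equivIco, QuotientAddGroup.equivIcoMod_coe,
    toIcoMod_eq_self, show -π + 2 * π = π by ring]
  exact hv.1

lemma psi_neg_psi {α : ℝ → ℝ} (hα : ∀ r, π ≤ r → α r = 0) (m : Cyl) :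
    psi (-α) (psi α m) = m := by
  rw [psi, psi, cylLift_q2 (mapsTo_twist_strip hα (cylLift_mem_strip m)), twist_neg_twist,
    q2_cylLift]

lemma psi_bijective {α : ℝ → ℝ} (hα : ∀ r, π ≤ r → α r = 0) : Bijective (psi α) := by
  refine bijective_iff_has_inverse.mpr ⟨psi (-α), psi_neg_psi hα, fun m => ?_⟩
  simpa only [neg_neg] using psi_neg_psi (α := -α) (fun r hr => by simp [hα r hr]) m

lemma measurable_q2 : Measurable q2 := by
  unfold q2
  fun_prop

lemma measurable_cylLift : Measurable cylLift :=
  (measurable_subtype_coe.comp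
    ((AddCircle.measurableEquivIco (2 * π) (-π)).measurable.comp measurable_fst)).prodMk
    measurable_snd

lemma measurePreserving_cylLift : MeasurePreserving cylLift cylMeasure (volume.restrict strip) := by
  refine ⟨measurable_cylLift, ?_⟩
  have hid : cylLift ∘ q2 =ᵐ[volume.restrict strip] id :=
    (ae_restrict_iff' measurableSet_strip).mpr (ae_of_all _ fun _ => cylLift_q2)
  rw [cylMeasure, Measure.map_map measurable_cylLift measurable_q2]
  exact (Measure.map_congr hid).trans Measure.map_id

lemma psi_measurePreserving {α : ℝ → ℝ} (hmeas : Measurable α) (hα : ∀ r, π ≤ r → α r = 0) :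
    MeasurePreserving (psi α) cylMeasure cylMeasure := by
  have hq : MeasurePreserving q2 (volume.restrict strip) cylMeasure := ⟨measurable_q2, rfl⟩
  have ht := (twist_measurePreserving hmeas).restrict_preimage measurableSet_strip
  rw [twist_preimage_strip hα] at ht
  exact hq.comp (ht.comp measurePreserving_cylLift)

lemma cylMeasure_eq_volume : cylMeasure = volume := by
  have hmk : MeasurePreserving ((↑) : ℝ → AddCircle (2 * π))
      (volume.restrict (Ico (-π) π)) volume :=
    measurePreserving_addCircle_mk_of_ae_eq (t := -π)
      (by rw [show -π + 2 * π = π by ring]; exact Ico_ae_eq_Ioc)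
  rw [cylMeasure, Measure.volume_eq_prod, ← Measure.prod_restrict, Measure.restrict_univ]
  exact (hmk.prod (MeasurePreserving.id volume)).map_eq

lemma phi_eq_add_right : phi = (· + (((π : ℝ) : AddCircle (2 * π)), (0 : ℝ))) :=
  funext fun m => Prod.ext rfl (add_zero m.2).symm

lemma phi_bijective : Bijective phi := by
  rw [phi_eq_add_right]
  exact (Equiv.addRight _).bijective

lemma phi_measurePreserving : MeasurePreserving phi cylMeasure cylMeasure := by
  rw [phi_eq_add_right, cylMeasure_eq_volume, Measure.volume_eq_prod]
  exact measurePreserving_add_right ((volume : Measure (AddCircle (2 * π))).prod volume) _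

/-- g is an area-preserving bijection of the cylinder. -/
theorem gmap_measurePreserving (α : ℝ → ℝ) (hα : TwistAngle α) :
    Function.Bijective (gmap α) ∧
    MeasurePreserving (gmap α) cylMeasure cylMeasure := by
  have hvanish : ∀ r, π ≤ r → α r = 0 := fun r hr =>
    hα.zero r (by linarith [pi_gt_three])
  exact ⟨phi_bijective.comp (psi_bijective hvanish),
    phi_measurePreserving.comp (psi_measurePreserving hα.cont.measurable hvanish)⟩
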